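/- arXiv:1710.10044 — 3 statements merged into one kernel-verified Lean document; each statement's English description precedes it below -/
import Mathlib

section
/- Let μ be a probability measure on ℝ with finite first moment, F its CDF and F⁻¹ its quantile function, and let 0 ≤ τ < τ' ≤ 1 with m = (τ + τ')/2 ∈ (0,1]. Then θ* = F⁻¹(m) is a minimizer over θ ∈ ℝ of the function g(θ) = ∫_τ^{τ'} |F⁻¹(ω) − θ| dω; moreover, every θ ∈ ℝ satisfying F(θ) = m is also a minimizer of g. -/
/-!
If `f ≤ c` on the left half of `[a, b]` and `c ≤ f` on the right half, then pointwise
`|f - θ| - |f - c|` is at least `θ - c` on the left half and at least `c - θ` on the right half;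
the halves have equal length, so `∫ |f - θ| ≥ ∫ |f - c|`. For `f = F⁻¹` on `[τ, τ']`, both
`F⁻¹(m)` and any `θ₀` with `F(θ₀) = m` are such values `c`, by monotonicity of `F⁻¹` and the
Galois connection `F⁻¹(ω) ≤ y ↔ ω ≤ F(y)` for `ω ∈ (0, 1)`.
-/

open MeasureTheory Set

/-- The CDF of a measure on ℝ: `F(y) = μ((-∞, y])`. -/
noncomputable def cdfFn (μ : Measure ℝ) (y : ℝ) : ℝ := (μ (Iic y)).toReal

/-- The quantile function (generalized inverse CDF): `F⁻¹(ω) = inf {y | ω ≤ F(y)}`. -/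
noncomputable def quantileFn (μ : Measure ℝ) (ω : ℝ) : ℝ := sInf {y : ℝ | ω ≤ cdfFn μ y}

open ProbabilityTheory Filter

section Quantile

variable (μ : Measure ℝ) [IsProbabilityMeasure μ]

lemma cdfFn_eq_cdf : cdfFn μ = cdf μ := funext fun y => (cdf_eq_real μ y).symm

lemma bddBelow_setOf_le_cdfFn {ω : ℝ} (hω : 0 < ω) : BddBelow {y | ω ≤ cdfFn μ y} := by
  obtain ⟨y₀, hy₀⟩ := ((tendsto_cdf_atBot μ).eventually (eventually_lt_nhds hω)).exists
  refine ⟨y₀, fun y hy => le_of_not_ge fun hyy₀ => ?_⟩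
  rw [mem_ofPred_eq, cdfFn_eq_cdf] at hy
  exact (hy.trans ((cdf μ).mono hyy₀)).not_gt hy₀

lemma nonempty_setOf_le_cdfFn {ω : ℝ} (hω : ω < 1) : {y | ω ≤ cdfFn μ y}.Nonempty := by
  obtain ⟨y, hy⟩ := ((tendsto_cdf_atTop μ).eventually (eventually_gt_nhds hω)).exists
  exact ⟨y, by rw [mem_ofPred_eq, cdfFn_eq_cdf]; exact hy.le⟩

lemma quantileFn_le_iff {ω y : ℝ} (h0 : 0 < ω) (h1 : ω < 1) :
    quantileFn μ ω ≤ y ↔ ω ≤ cdfFn μ y := by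
  refine ⟨fun h => ?_, fun h => csInf_le (bddBelow_setOf_le_cdfFn μ h0) h⟩
  have hgt : ∀ z ∈ Ioi y, ω ≤ cdf μ z := fun z hz => by
    obtain ⟨s, hs, hsz⟩ := (csInf_lt_iff (bddBelow_setOf_le_cdfFn μ h0)
      (nonempty_setOf_le_cdfFn μ h1)).1 (h.trans_lt hz)
    rw [mem_ofPred_eq, cdfFn_eq_cdf] at hs
    exact hs.trans ((cdf μ).mono hsz.le)
  rw [cdfFn_eq_cdf]
  exact ge_of_tendsto (((cdf μ).right_continuous y).mono_left
    (nhdsWithin_mono _ Ioi_subset_Ici_self)) (eventually_nhdsWithin_of_forall hgt)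

lemma monotoneOn_quantileFn : MonotoneOn (quantileFn μ) (Ioo 0 1) := fun _ ha _ hb hab =>
  (quantileFn_le_iff μ ha.1 ha.2).2 (hab.trans ((quantileFn_le_iff μ hb.1 hb.2).1 le_rfl))

end Quantile

lemma IntervalIntegrable.integral_abs_sub_le_of_crossing_midpoint {f : ℝ → ℝ} {a b c : ℝ}
    (hf : IntervalIntegrable f volume a b) (hab : a ≤ b)
    (hleft : ∀ x ∈ Ioo a ((a + b) / 2), f x ≤ c) (hright : ∀ x ∈ Ioo ((a + b) / 2) b, c ≤ f x)
    (θ : ℝ) : ∫ x in a..b, |f x - c| ≤ ∫ x in a..b, |f x - θ| := by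
  have ham : a ≤ (a + b) / 2 := by linarith
  have hmb : (a + b) / 2 ≤ b := by linarith
  have hm : (a + b) / 2 ∈ uIcc a b := by rw [uIcc_of_le hab]; exact ⟨ham, hmb⟩
  have habs (d : ℝ) : IntervalIntegrable (fun x => |f x - d|) volume a b :=
    (hf.sub intervalIntegrable_const).abs
  set D := fun x => |f x - θ| - |f x - c|
  have hD : IntervalIntegrable D volume a b := (habs θ).sub (habs c)
  have hDleft : ((a + b) / 2 - a) * (θ - c) ≤ ∫ x in a..(a + b) / 2, D x := by
    calc ((a + b) / 2 - a) * (θ - c) = ∫ _ in a..(a + b) / 2, θ - c := by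
          rw [intervalIntegral.integral_const, smul_eq_mul]
      _ ≤ ∫ x in a..(a + b) / 2, D x := by
        refine intervalIntegral.integral_mono_on_of_le_Ioo ham intervalIntegrable_const
          (hD.mono_set (uIcc_subset_uIcc_left hm)) fun x hx => ?_
        have := hleft x hx
        simp only [D, abs_of_nonpos (sub_nonpos.2 this)]
        linarith [neg_le_abs (f x - θ)]
  have hDright : (b - (a + b) / 2) * (c - θ) ≤ ∫ x in (a + b) / 2..b, D x := by
    calc (b - (a + b) / 2) * (c - θ) = ∫ _ in (a + b) / 2..b, c - θ := by
          rw [intervalIntegral.integral_const, smul_eq_mul]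
      _ ≤ ∫ x in (a + b) / 2..b, D x := by
        refine intervalIntegral.integral_mono_on_of_le_Ioo hmb intervalIntegrable_const
          (hD.mono_set (uIcc_subset_uIcc_right hm)) fun x hx => ?_
        have := hright x hx
        simp only [D, abs_of_nonneg (sub_nonneg.2 this)]
        linarith [le_abs_self (f x - θ)]
  have hD_nonneg : 0 ≤ ∫ x in a..b, D x := by
    rw [← intervalIntegral.integral_add_adjacent_intervals
      (hD.mono_set (uIcc_subset_uIcc_left hm))
      (hD.mono_set (uIcc_subset_uIcc_right hm))]
    linarith
  rw [intervalIntegral.integral_sub (habs θ) (habs c)] at hD_nonneg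
  linarith

lemma integral_abs_sub_le_of_crossing_midpoint {f : ℝ → ℝ} {a b c : ℝ} (hab : a ≤ b)
    (hf : AEStronglyMeasurable f (volume.restrict (Ioc a b)))
    (hleft : ∀ x ∈ Ioo a ((a + b) / 2), f x ≤ c) (hright : ∀ x ∈ Ioo ((a + b) / 2) b, c ≤ f x)
    (θ : ℝ) : ∫ x in a..b, |f x - c| ≤ ∫ x in a..b, |f x - θ| := by
  by_cases hI : IntervalIntegrable f volume a b
  · exact hI.integral_abs_sub_le_of_crossing_midpoint hab hleft hright θ
  -- otherwise `|f - c|` is not integrable either, and the left side is the junk value `0`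
  have hc : ¬ IntervalIntegrable (fun x => |f x - c|) volume a b := fun h => hI <| by
    have hfc : IntegrableOn (fun x => f x - c) (Ioc a b) :=
      (integrable_norm_iff (hf.sub aestronglyMeasurable_const)).1
        (by simp only [Real.norm_eq_abs]; exact h.1)
    simpa using ((intervalIntegrable_iff_integrableOn_Ioc_of_le hab).2 hfc).add
      (intervalIntegrable_const (c := c))
  rw [intervalIntegral.integral_undef hc]
  exact intervalIntegral.integral_nonneg hab fun x _ => abs_nonneg _

theorem quantile_midpoint_minimizer_general
    (μ : Measure ℝ) [IsProbabilityMeasure μ]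
    (τ τ' : ℝ) (hτ : 0 ≤ τ) (hττ' : τ < τ') (hτ' : τ' ≤ 1)
    (m : ℝ) (hm : m = (τ + τ') / 2) :
    (∀ θ : ℝ,
      (∫ ω in τ..τ', |quantileFn μ ω - quantileFn μ m|) ≤ ∫ ω in τ..τ', |quantileFn μ ω - θ|) ∧
    (∀ θ₀ : ℝ, cdfFn μ θ₀ = m →
      ∀ θ : ℝ,
        (∫ ω in τ..τ', |quantileFn μ ω - θ₀|) ≤ ∫ ω in τ..τ', |quantileFn μ ω - θ|) := by
  subst hm
  have hunit : Ioo τ τ' ⊆ Ioo 0 1 := Ioo_subset_Ioo hτ hτ'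
  have hmid : (τ + τ') / 2 ∈ Ioo τ τ' := ⟨by linarith, by linarith⟩
  have hleft : Ioo τ ((τ + τ') / 2) ⊆ Ioo 0 1 := (Ioo_subset_Ioo_right hmid.2.le).trans hunit
  have hright : Ioo ((τ + τ') / 2) τ' ⊆ Ioo 0 1 := (Ioo_subset_Ioo_left hmid.1.le).trans hunit
  have hmeas : AEStronglyMeasurable (quantileFn μ) (volume.restrict (Ioc τ τ')) := by
    rw [← Measure.restrict_congr_set Ioo_ae_eq_Ioc]
    exact (aemeasurable_restrict_of_monotoneOn measurableSet_Ioo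
      ((monotoneOn_quantileFn μ).mono hunit)).aestronglyMeasurable
  refine ⟨integral_abs_sub_le_of_crossing_midpoint hττ'.le hmeas ?_ ?_,
    fun θ₀ hθ₀ => integral_abs_sub_le_of_crossing_midpoint hττ'.le hmeas ?_ ?_⟩
  · exact fun ω hω => monotoneOn_quantileFn μ (hleft hω) (hunit hmid) hω.2.le
  · exact fun ω hω => monotoneOn_quantileFn μ (hunit hmid) (hright hω) hω.1.le
  · exact fun ω hω => (quantileFn_le_iff μ (hleft hω).1 (hleft hω).2).2 (hθ₀ ▸ hω.2.le)
  · exact fun ω hω => le_of_not_ge fun h =>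
      hω.1.not_ge (hθ₀ ▸ (quantileFn_le_iff μ (hright hω).1 (hright hω).2).1 h)

/-- `F⁻¹((τ+τ')/2)` minimizes `θ ↦ ∫_τ^{τ'} |F⁻¹(ω) - θ| dω`, and so does any
`θ` with `F(θ) = (τ+τ')/2`. -/
theorem quantile_midpoint_minimizer
    (μ : Measure ℝ) [IsProbabilityMeasure μ] (hint : Integrable (fun x : ℝ => x) μ)
    (τ τ' : ℝ) (hτ : 0 ≤ τ) (hττ' : τ < τ') (hτ' : τ' ≤ 1)
    (m : ℝ) (hm : m = (τ + τ') / 2) (hm' : m ∈ Set.Ioc (0 : ℝ) 1) :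
    (∀ θ : ℝ,
      (∫ ω in τ..τ', |quantileFn μ ω - quantileFn μ m|) ≤ ∫ ω in τ..τ', |quantileFn μ ω - θ|) ∧
    (∀ θ₀ : ℝ, cdfFn μ θ₀ = m →
      ∀ θ : ℝ,
        (∫ ω in τ..τ', |quantileFn μ ω - θ₀|) ≤ ∫ ω in τ..τ', |quantileFn μ ω - θ|) :=
  quantile_midpoint_minimizer_general μ τ τ' hτ hττ' hτ' m hm
end

section
/- For every p ∈ [1, ∞) there exist N ≥ 1, m ≥ 1, and a probability measure Z on ℝ with finite moments of all orders, such that the set of minimizers over θ ∈ ℝ^N of the expected empirical Wasserstein loss θ ↦ E[W_p(Ẑ_m, Z_θ)], where Ẑ_m = (1/m) ∑_{k=1}^m δ_{Y_k} is the empirical measure of m i.i.d. samples Y_1, …, Y_m drawn from Z, is different from the set of minimizers over θ ∈ ℝ^N of the true Wasserstein loss θ ↦ W_p(Z, Z_θ). -/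
open MeasureTheory Set
open scoped ENNReal

/-- The quantile distribution with atoms `θ : Fin N → ℝ`, i.e. `(1/N) ∑ᵢ δ_{θᵢ}`. -/
noncomputable def quantDist {N : ℕ} (θ : Fin N → ℝ) : Measure ℝ :=
  (N : ℝ≥0∞)⁻¹ • ∑ i : Fin N, Measure.dirac (θ i)

/-- The p-Wasserstein distance `W_p(μ, ν) = (∫_0^1 |F_μ⁻¹(ω) - F_ν⁻¹(ω)|^p dω)^{1/p}`. -/
noncomputable def Wp (p : ℝ) (μ ν : Measure ℝ) : ℝ :=
  (∫ ω in (0:ℝ)..1, |quantileFn μ ω - quantileFn ν ω| ^ p) ^ (1 / p)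

/-! Take `Z` uniform on `{-1, 1}`, `N = 2` and a single sample (`m = 1`). The empirical measure
is then `δ_Y`, so the expected empirical loss of `θ` is `(W_p(δ₋₁, Z_θ) + W_p(δ₁, Z_θ)) / 2`, which
is at least `W_p(δ₋₁, δ₁) / 2 = 1` by the triangle inequality, with equality at `θ = (0, 0)`.
But `Z_(0,0)` is at distance `1` from `Z`, whereas `Z_(-1,1) = Z`. -/

lemma quantileFn_eq_of_forall_le_cdfFn_iff {μ : Measure ℝ} {ω a : ℝ}
    (h : ∀ y, ω ≤ cdfFn μ y ↔ a ≤ y) : quantileFn μ ω = a := by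
  rw [quantileFn, show {y | ω ≤ cdfFn μ y} = Ici a from ext h, csInf_Ici]

lemma cdfFn_quantDist {N : ℕ} (θ : Fin N → ℝ) (y : ℝ) :
    cdfFn (quantDist θ) y = (N : ℝ)⁻¹ * ∑ i, if θ i ≤ y then 1 else 0 := by
  simp [cdfFn, quantDist, Measure.dirac_apply' _ measurableSet_Iic, indicator]

lemma quantileFn_dirac (c : ℝ) {ω : ℝ} (hω : ω ∈ Ioc 0 1) :
    quantileFn (Measure.dirac c) ω = c := by
  refine quantileFn_eq_of_forall_le_cdfFn_iff fun y => ?_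
  rw [cdfFn, Measure.dirac_apply' _ measurableSet_Iic]
  by_cases h : c ≤ y
  · simpa [h] using hω.2
  · simpa [h] using hω.1

def HasHalfQuantiles (μ : Measure ℝ) (a b : ℝ) : Prop :=
  (∀ ω ∈ Ioc 0 (2⁻¹ : ℝ), quantileFn μ ω = a) ∧ ∀ ω ∈ Ioc (2⁻¹ : ℝ) 1, quantileFn μ ω = b

lemma hasHalfQuantiles_dirac (c : ℝ) : HasHalfQuantiles (Measure.dirac c) c c :=
  ⟨fun _ hω => quantileFn_dirac c (Ioc_subset_Ioc_right (by norm_num) hω),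
    fun _ hω => quantileFn_dirac c (Ioc_subset_Ioc_left (by norm_num) hω)⟩

lemma hasHalfQuantiles_quantDist (θ : Fin 2 → ℝ) :
    HasHalfQuantiles (quantDist θ) (min (θ 0) (θ 1)) (max (θ 0) (θ 1)) := by
  constructor <;> rintro ω ⟨hω₀, hω₁⟩ <;>
    refine quantileFn_eq_of_forall_le_cdfFn_iff fun y => ?_ <;>
    simp only [cdfFn_quantDist, Fin.sum_univ_two, min_le_iff, max_le_iff] <;>
    by_cases h₀ : θ 0 ≤ y <;> by_cases h₁ : θ 1 ≤ y <;>
    simp only [h₀, h₁, if_true, if_false] <;> norm_num at * <;> linarith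

lemma intervalIntegrable_and_integral_eq_of_eqOn_Ioc {f : ℝ → ℝ} {a b c : ℝ} (hab : a ≤ b)
    (h : EqOn f (fun _ => c) (Ioc a b)) :
    IntervalIntegrable f volume a b ∧ ∫ x in a..b, f x = (b - a) * c := by
  rw [← uIoc_of_le hab] at h
  refine ⟨(intervalIntegrable_congr h).2 intervalIntegrable_const, ?_⟩
  rw [intervalIntegral.integral_congr_ae (ae_of_all _ h), intervalIntegral.integral_const,
    smul_eq_mul]

lemma intervalIntegral_zero_one_of_eqOn_halves {f : ℝ → ℝ} {c d : ℝ}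
    (hc : EqOn f (fun _ => c) (Ioc 0 2⁻¹)) (hd : EqOn f (fun _ => d) (Ioc 2⁻¹ 1)) :
    ∫ ω in (0 : ℝ)..1, f ω = (c + d) / 2 := by
  obtain ⟨hfc, hc⟩ := intervalIntegrable_and_integral_eq_of_eqOn_Ioc (by norm_num) hc
  obtain ⟨hfd, hd⟩ := intervalIntegrable_and_integral_eq_of_eqOn_Ioc (by norm_num) hd
  rw [← intervalIntegral.integral_add_adjacent_intervals hfc hfd, hc, hd]
  ring

lemma Wp_eq_of_hasHalfQuantiles {μ ν : Measure ℝ} {a b a' b' : ℝ} (p : ℝ)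
    (hμ : HasHalfQuantiles μ a b) (hν : HasHalfQuantiles ν a' b') :
    Wp p μ ν = ((|a - a'| ^ p + |b - b'| ^ p) / 2) ^ (1 / p) := by
  rw [Wp, intervalIntegral_zero_one_of_eqOn_halves (c := |a - a'| ^ p) (d := |b - b'| ^ p)
    (fun ω hω => by simp only [hμ.1 ω hω, hν.1 ω hω])
    (fun ω hω => by simp only [hμ.2 ω hω, hν.2 ω hω])]

lemma Wp_self (μ : Measure ℝ) {p : ℝ} (hp : p ≠ 0) : Wp p μ μ = 0 := by
  simp [Wp, Real.zero_rpow hp, hp]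

lemma Wp_eq_abs_sub_of_hasHalfQuantiles {μ ν : Measure ℝ} {a b p : ℝ} (hp : p ≠ 0)
    (hμ : HasHalfQuantiles μ a a) (hν : HasHalfQuantiles ν b b) : Wp p μ ν = |a - b| := by
  rw [Wp_eq_of_hasHalfQuantiles p hμ hν, add_self_div_two, ← Real.rpow_mul (abs_nonneg _),
    mul_one_div_cancel hp, Real.rpow_one]

lemma add_div_two_le_rpow_mean {p : ℝ} (hp : 1 ≤ p) {x y : ℝ} (hx : 0 ≤ x) (hy : 0 ≤ y) :
    (x + y) / 2 ≤ ((x ^ p + y ^ p) / 2) ^ (1 / p) := by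
  have := Real.arith_mean_le_rpow_mean Finset.univ ![2⁻¹, 2⁻¹] ![x, y] (by simp)
    (by norm_num [Fin.sum_univ_two]) (by simp [Fin.forall_fin_two, hx, hy]) hp
  simp only [Fin.sum_univ_two, Matrix.cons_val_zero, Matrix.cons_val_one] at this
  convert this using 2 <;> ring

lemma abs_sub_le_Wp_dirac_add_Wp_dirac {μ : Measure ℝ} {a b p : ℝ} (hp : 1 ≤ p)
    (hμ : HasHalfQuantiles μ a b) (y z : ℝ) :
    |y - z| ≤ Wp p (Measure.dirac y) μ + Wp p (Measure.dirac z) μ := by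
  rw [Wp_eq_of_hasHalfQuantiles p (hasHalfQuantiles_dirac y) hμ,
    Wp_eq_of_hasHalfQuantiles p (hasHalfQuantiles_dirac z) hμ]
  -- `W_p ≥ W_1` by the power-mean inequality; then the triangle inequality in `ℝ` on each half.
  have hy := add_div_two_le_rpow_mean hp (abs_nonneg (y - a)) (abs_nonneg (y - b))
  have hz := add_div_two_le_rpow_mean hp (abs_nonneg (z - a)) (abs_nonneg (z - b))
  have ha := abs_sub_le y a z
  have hb := abs_sub_le y b z
  rw [abs_sub_comm a z] at ha
  rw [abs_sub_comm b z] at hb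
  linarith

lemma isProbabilityMeasure_quantDist {N : ℕ} (hN : N ≠ 0) (θ : Fin N → ℝ) :
    IsProbabilityMeasure (quantDist θ) :=
  ⟨by simp [quantDist, ENNReal.inv_mul_cancel, hN]⟩

lemma integrable_quantDist {N : ℕ} (θ : Fin N → ℝ) (g : ℝ → ℝ) : Integrable g (quantDist θ) := by
  rcases eq_or_ne N 0 with rfl | hN
  · simp [quantDist]
  · exact (integrable_finsetSum_measure.2 fun _ _ => integrable_dirac enorm_lt_top).smul_measure
      (by simpa using hN)

lemma integral_quantDist {N : ℕ} (θ : Fin N → ℝ) (g : ℝ → ℝ) :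
    ∫ x, g x ∂quantDist θ = (N : ℝ)⁻¹ * ∑ i, g (θ i) := by
  simp [quantDist, integral_finsetSum_measure fun _ _ => integrable_dirac enorm_lt_top,
    integral_smul_measure]

lemma quantDist_fin_one (Y : Fin 1 → ℝ) : quantDist Y = Measure.dirac (Y 0) := by
  simp [quantDist]

noncomputable def empiricalLoss (p : ℝ) (m : ℕ) (Z : Measure ℝ) {N : ℕ} (θ : Fin N → ℝ) : ℝ :=
  ∫ Y, Wp p (quantDist Y) (quantDist θ) ∂Measure.pi fun _ : Fin m => Z

lemma empiricalLoss_one (p : ℝ) (Z : Measure ℝ) {N : ℕ} (θ : Fin N → ℝ) :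
    empiricalLoss p 1 Z θ = ∫ x, Wp p (Measure.dirac x) (quantDist θ) ∂Z := by
  simp only [empiricalLoss, quantDist_fin_one]
  exact (measurePreserving_funUnique Z (Fin 1)).integral_comp' fun x =>
    Wp p (Measure.dirac x) (quantDist θ)

/-- for every `p ∈ [1, ∞)` there are `N, m ≥ 1` and a probability measure `Z` on ℝ
with finite moments of all orders such that the minimizers of the expected empirical Wasserstein
loss `θ ↦ E[W_p(Ẑ_m, Z_θ)]` (with `Ẑ_m` the empirical measure of `m` i.i.d. samples from `Z`)
differ from the minimizers of the true Wasserstein loss `θ ↦ W_p(Z, Z_θ)`. -/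
theorem biased_wasserstein_gradients (p : ℝ) (hp : 1 ≤ p) :
    ∃ (N m : ℕ) (Z : Measure ℝ), 1 ≤ N ∧ 1 ≤ m ∧ IsProbabilityMeasure Z ∧
      (∀ k : ℕ, Integrable (fun x : ℝ => |x| ^ k) Z) ∧
      {θ : Fin N → ℝ | ∀ θ' : Fin N → ℝ,
          (∫ Y, Wp p (quantDist Y) (quantDist θ) ∂(Measure.pi fun _ : Fin m => Z))
            ≤ ∫ Y, Wp p (quantDist Y) (quantDist θ') ∂(Measure.pi fun _ : Fin m => Z)} ≠
      {θ : Fin N → ℝ | ∀ θ' : Fin N → ℝ, Wp p Z (quantDist θ) ≤ Wp p Z (quantDist θ')} := by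
  have hp₀ : p ≠ 0 := by positivity
  set Z := quantDist ![(-1 : ℝ), 1]
  refine ⟨2, 1, Z, one_le_two, le_rfl, isProbabilityMeasure_quantDist two_ne_zero _,
    fun k => integrable_quantDist _ _, fun heq => ?_⟩
  have hZ : HasHalfQuantiles Z (-1) 1 := by simpa using hasHalfQuantiles_quantDist ![(-1 : ℝ), 1]
  have h₀ : HasHalfQuantiles (quantDist (0 : Fin 2 → ℝ)) 0 0 := by
    simpa using hasHalfQuantiles_quantDist (0 : Fin 2 → ℝ)
  have hloss (θ : Fin 2 → ℝ) : empiricalLoss p 1 Z θ =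
      (Wp p (Measure.dirac (-1)) (quantDist θ) + Wp p (Measure.dirac 1) (quantDist θ)) / 2 := by
    rw [empiricalLoss_one, integral_quantDist, Fin.sum_univ_two]
    simp only [Matrix.cons_val_zero, Matrix.cons_val_one]
    ring
  have hmin (θ' : Fin 2 → ℝ) : empiricalLoss p 1 Z (0 : Fin 2 → ℝ) ≤ empiricalLoss p 1 Z θ' := by
    have := abs_sub_le_Wp_dirac_add_Wp_dirac hp (hasHalfQuantiles_quantDist θ') (-1) 1
    rw [hloss, hloss, Wp_eq_abs_sub_of_hasHalfQuantiles hp₀ (hasHalfQuantiles_dirac _) h₀,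
      Wp_eq_abs_sub_of_hasHalfQuantiles hp₀ (hasHalfQuantiles_dirac _) h₀]
    norm_num at this ⊢
    linarith
  have hnot_min : Wp p Z Z < Wp p Z (quantDist (0 : Fin 2 → ℝ)) := by
    rw [Wp_self _ hp₀, Wp_eq_of_hasHalfQuantiles p hZ h₀]
    norm_num
  exact hnot_min.not_ge ((Set.ext_iff.1 heq 0).1 hmin ![-1, 1])
end

section
/- Let I be a countable set, let p : I → [0,1] satisfy ∑_{i∈I} p_i = 1, and let θ, ψ : I → ℝ be functions with sup_{i∈I} |θ_i − ψ_i| < ∞. Define the probability measures μ = ∑_{i∈I} p_i δ_{θ_i} and ν = ∑_{i∈I} p_i δ_{ψ_i} on ℝ. Then for every τ ∈ (0,1], |F_μ⁻¹(τ) − F_ν⁻¹(τ)| ≤ sup_{i∈I} |θ_i − ψ_i|; that is, corresponding quantiles of the two mixtures differ by at most the largest difference between correspondingly indexed atoms. -/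
open MeasureTheory Set Filter Topology
open scoped ENNReal

lemma bddBelow_quantile_set (m : Measure ℝ) (hfin : ∀ y, m (Iic y) ≤ 1) {τ : ℝ}
    (hτ : 0 < τ) : BddBelow {y | τ ≤ cdfFn m y} := by
  have hempty : ⋂ n : ℤ, Iic ((n : ℝ)) = ∅ := by
    ext x
    simp only [mem_iInter, mem_Iic, mem_empty_iff_false, iff_false, not_forall, not_le]
    obtain ⟨n, hn⟩ := exists_int_lt x
    exact ⟨n, hn⟩
  have htend : Tendsto (fun n : ℤ => m (Iic (n : ℝ))) atBot (𝓝 0) := by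
    have := tendsto_measure_iInter_atBot
      (μ := m) (s := fun n : ℤ => Iic ((n : ℝ)))
      (fun n => measurableSet_Iic.nullMeasurableSet)
      (fun a b hab => Iic_subset_Iic.2 (by exact_mod_cast hab))
      ⟨0, by simpa using ne_top_of_le_ne_top ENNReal.one_ne_top (hfin 0)⟩
    rwa [hempty, measure_empty] at this
  obtain ⟨n, hn⟩ := (htend.eventually_lt_const (by simpa using hτ : (0:ℝ≥0∞) < ENNReal.ofReal τ)).exists
  refine ⟨(n : ℝ), fun y hy => ?_⟩
  by_contra hlt
  push_neg at hlt
  have h1 : m (Iic y) < ENNReal.ofReal τ :=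
    lt_of_le_of_lt (measure_mono (Iic_subset_Iic.2 hlt.le)) hn
  have := ENNReal.toReal_lt_of_lt_ofReal h1
  exact absurd hy (by simpa [cdfFn] using this.not_ge)

/-- for countable mixtures of Diracs `μ = ∑ᵢ pᵢ δ_{θᵢ}` and `ν = ∑ᵢ pᵢ δ_{ψᵢ}`
with the same weights, corresponding quantiles differ by at most `supᵢ |θᵢ - ψᵢ|`. -/
theorem quantile_mixture_diff_le_sup
    (I : Type*) [Countable I] (p : I → ℝ) (hp : ∀ i, p i ∈ Set.Icc (0:ℝ) 1)
    (hsum : ∑' i, p i = 1) (θ ψ : I → ℝ)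
    (hbdd : BddAbove (Set.range fun i => |θ i - ψ i|))
    (τ : ℝ) (hτ : τ ∈ Set.Ioc (0:ℝ) 1) :
    |quantileFn (Measure.sum fun i => ENNReal.ofReal (p i) • Measure.dirac (θ i)) τ -
      quantileFn (Measure.sum fun i => ENNReal.ofReal (p i) • Measure.dirac (ψ i)) τ|
      ≤ ⨆ i, |θ i - ψ i| := by
  have hI : Nonempty I := by
    by_contra h
    rw [not_nonempty_iff] at h
    simp [tsum_empty] at hsum
  set S := ⨆ i, |θ i - ψ i| with hSdef
  have hdist : ∀ i, |θ i - ψ i| ≤ S := fun i => le_ciSup hbdd i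
  have hS0 : 0 ≤ S := le_trans (abs_nonneg _) (hdist (Classical.arbitrary I))
  have hsummable : Summable p := by
    by_contra h
    rw [tsum_eq_zero_of_not_summable h] at hsum
    norm_num at hsum
  -- total mass bound
  have htot : ∀ f : I → ℝ, ∀ y : ℝ,
      (Measure.sum fun i => ENNReal.ofReal (p i) • Measure.dirac (f i)) (Iic y) ≤ 1 := by
    intro f y
    rw [Measure.sum_apply _ measurableSet_Iic]
    calc ∑' i, (ENNReal.ofReal (p i) • Measure.dirac (f i)) (Iic y)
        ≤ ∑' i, ENNReal.ofReal (p i) := by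
          refine ENNReal.tsum_le_tsum fun i => ?_
          simp only [Measure.smul_apply, smul_eq_mul]
          calc ENNReal.ofReal (p i) * Measure.dirac (f i) (Iic y)
              ≤ ENNReal.ofReal (p i) * 1 := by
                gcongr
                rw [Measure.dirac_apply' _ measurableSet_Iic]
                by_cases hi : f i ∈ Iic y <;> simp [hi]
            _ = ENNReal.ofReal (p i) := mul_one _
      _ = ENNReal.ofReal (∑' i, p i) :=
          (ENNReal.ofReal_tsum_of_nonneg (fun i => (hp i).1) hsummable).symm
      _ = 1 := by rw [hsum]; simp
  -- cdf comparison
  have hcdf : ∀ f g : I → ℝ, ∀ y z : ℝ, (∀ i, f i ≤ y → g i ≤ z) →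
      cdfFn (Measure.sum fun i => ENNReal.ofReal (p i) • Measure.dirac (f i)) y ≤
        cdfFn (Measure.sum fun i => ENNReal.ofReal (p i) • Measure.dirac (g i)) z := by
    intro f g y z h
    unfold cdfFn
    refine ENNReal.toReal_mono (fun ht => absurd (ht ▸ htot g z) (by simp)) ?_
    rw [Measure.sum_apply _ measurableSet_Iic, Measure.sum_apply _ measurableSet_Iic]
    refine ENNReal.tsum_le_tsum fun i => ?_
    simp only [Measure.smul_apply, smul_eq_mul,
      Measure.dirac_apply' _ measurableSet_Iic]
    gcongr
    by_cases hi : f i ≤ y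
    · simp [indicator, hi, h i hi]
    · simp [indicator, hi]
  set μ := Measure.sum fun i => ENNReal.ofReal (p i) • Measure.dirac (θ i) with hμ
  set ν := Measure.sum fun i => ENNReal.ofReal (p i) • Measure.dirac (ψ i) with hν
  set A := {y : ℝ | τ ≤ cdfFn μ y} with hA
  set B := {y : ℝ | τ ≤ cdfFn ν y} with hB
  have hAB : ∀ y ∈ A, y + S ∈ B := by
    intro y hy
    refine le_trans hy (hcdf θ ψ y (y + S) fun i hi => ?_)
    have := (abs_sub_le_iff.1 (hdist i)).2
    linarith
  have hBA : ∀ y ∈ B, y + S ∈ A := by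
    intro y hy
    refine le_trans hy (hcdf ψ θ y (y + S) fun i hi => ?_)
    have := (abs_sub_le_iff.1 (hdist i)).1
    linarith
  have hbA : BddBelow A := bddBelow_quantile_set μ (htot θ) hτ.1
  have hbB : BddBelow B := bddBelow_quantile_set ν (htot ψ) hτ.1
  by_cases hAne : A.Nonempty
  · have hBne : B.Nonempty := ⟨_, hAB _ hAne.choose_spec⟩
    have h1 : sInf B ≤ sInf A + S := by
      have : ∀ y ∈ A, sInf B - S ≤ y := fun y hy => by
        have := csInf_le hbB (hAB y hy); linarith
      have := le_csInf hAne this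
      linarith
    have h2 : sInf A ≤ sInf B + S := by
      have : ∀ y ∈ B, sInf A - S ≤ y := fun y hy => by
        have := csInf_le hbA (hBA y hy); linarith
      have := le_csInf hBne this
      linarith
    have ea : quantileFn μ τ = sInf A := rfl
    have eb : quantileFn ν τ = sInf B := rfl
    rw [abs_sub_le_iff, ea, eb]
    constructor <;> linarith
  · have hBne : ¬ B.Nonempty := fun ⟨y, hy⟩ => hAne ⟨y + S, hBA y hy⟩
    rw [not_nonempty_iff_eq_empty] at hAne hBne
    simp only [quantileFn, ← hA, ← hB, hAne, hBne, Real.sInf_empty, sub_self, abs_zero]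
    exact hS0
end
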